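/- Let n ≥ 3 be an integer, α > 0 a real number, and 0 < d < 1. Set T = -ln(d)/(2n). Then the function t ↦ (d e^{2nt})^{α/2} (1 - d e^{2nt})^{(n-α)/2} is integrable on the interval (0, T) if and only if α < n+2. -/

import Mathlib

open Real MeasureTheory Set

/-!
With `u(t) = d e^{2nt} = e^{-2n(T-t)}`, on `(0, T)` the factor `u^{α/2}` stays between positive
constants, and since the chord slopes `(1 - e^{-y}) / y` of the concave function `1 - e^{-y}`
decrease, so does the ratio `(1 - u) / (T - t)`: it lies between `(1 - d) / T` and `2n`. Hence the
integrand is comparable to `(T - t)^{(n-α)/2}`, which is integrable on `(0, T)` iff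
`(n - α) / 2 > -1`.
-/

lemma integrableOn_Ioo_sub_rpow_iff {T β : ℝ} (hT : 0 < T) :
    IntegrableOn (fun t : ℝ => (T - t) ^ β) (Ioo 0 T) ↔ -1 < β := by
  have reflect :=
    IntervalIntegrable.comp_sub_left_iff (f := fun x : ℝ => x ^ β) (a := T) (b := 0) T
  rw [sub_self, sub_zero] at reflect
  rw [← intervalIntegral.integrableOn_Ioo_rpow_iff hT,
    ← intervalIntegrable_iff_integrableOn_Ioo_of_le hT.le,
    ← intervalIntegrable_iff_integrableOn_Ioo_of_le hT.le, reflect]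
  exact ⟨.symm, .symm⟩

lemma integrable_mul_iff_of_norm_bounds {X : Type*} [MeasurableSpace X] {μ : Measure X}
    {φ g : X → ℝ} (hφ : AEStronglyMeasurable φ μ) {c C : ℝ} (hc : 0 < c)
    (hbound : ∀ᵐ x ∂μ, c ≤ ‖φ x‖ ∧ ‖φ x‖ ≤ C) :
    Integrable (fun x => φ x * g x) μ ↔ Integrable g μ := by
  refine ⟨fun h => ?_, fun h => h.bdd_mul hφ (hbound.mono fun _ hx => hx.2)⟩
  have hφinv : ∀ᵐ x ∂μ, ‖(φ x)⁻¹‖ ≤ c⁻¹ := hbound.mono fun x hx => by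
    rw [norm_inv]; exact inv_anti₀ hc hx.1
  refine (h.bdd_mul hφ.aemeasurable.inv.aestronglyMeasurable hφinv).congr
    (hbound.mono fun x hx => ?_)
  have : φ x ≠ 0 := norm_pos_iff.1 (hc.trans_le hx.1)
  simp [this]

lemma antitoneOn_one_sub_exp_neg_div : AntitoneOn (fun y : ℝ => (1 - exp (-y)) / y) (Ioi 0) := by
  intro x (hx : 0 < x) y (hy : 0 < y) hxy
  have key := convexOn_exp.secant_mono (a := 0) (x := -y) (y := -x) trivial trivial trivial
    (by linarith) (by linarith) (by linarith)
  have slope (z : ℝ) : (exp (-z) - exp 0) / (-z - 0) = (1 - exp (-z)) / z := by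
    rw [exp_zero, sub_zero, div_neg, ← neg_div, neg_sub]
  rwa [slope, slope] at key

lemma one_sub_exp_neg_mul_div_mem_Icc {k s S : ℝ} (hk : 0 < k) (hs : 0 < s) (hsS : s ≤ S) :
    (1 - exp (-(k * s))) / s ∈ Icc ((1 - exp (-(k * S))) / S) k := by
  refine ⟨?_, (div_le_iff₀ hs).2 (by linarith [one_sub_le_exp_neg (k * s)])⟩
  have key := antitoneOn_one_sub_exp_neg_div (mul_pos hk hs) (mul_pos hk (hs.trans_le hsS))
    (mul_le_mul_of_nonneg_left hsS hk.le)
  dsimp only at key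
  rw [div_mul_eq_div_div_swap, div_mul_eq_div_div_swap] at key
  exact (div_le_div_iff_of_pos_right hk).1 key

lemma rpow_mem_Icc_min_max {a b r : ℝ} (ha : 0 < a) (hr : r ∈ Icc a b) (β : ℝ) :
    r ^ β ∈ Icc (min (a ^ β) (b ^ β)) (max (a ^ β) (b ^ β)) := by
  have hr0 : 0 < r := ha.trans_le hr.1
  rcases le_total 0 β with hβ | hβ
  · exact ⟨min_le_of_left_le (rpow_le_rpow ha.le hr.1 hβ),
      le_max_of_le_right (rpow_le_rpow hr0.le hr.2 hβ)⟩
  · exact ⟨min_le_of_right_le (rpow_le_rpow_of_nonpos hr0 hr.2 hβ),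
      le_max_of_le_left (rpow_le_rpow_of_nonpos ha hr.1 hβ)⟩

lemma integrableOn_Ioo_exp_rpow_mul_one_sub_exp_rpow_iff {k T : ℝ} (hk : 0 < k) (hT : 0 < T)
    (γ β : ℝ) :
    IntegrableOn (fun t => exp (-(k * (T - t))) ^ γ * (1 - exp (-(k * (T - t)))) ^ β)
      (Ioo 0 T) ↔ -1 < β := by
  set u : ℝ → ℝ := fun t => exp (-(k * (T - t)))
  set a : ℝ := (1 - exp (-(k * T))) / T
  have ha : 0 < a := div_pos (sub_pos.2 (exp_lt_one_iff.2 (by nlinarith))) hT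
  have hu (t : ℝ) (ht : t ∈ Ioo 0 T) : u t ∈ Icc (exp (-(k * T))) 1 :=
    ⟨exp_le_exp.2 (by nlinarith [ht.1]), exp_le_one_iff.2 (by nlinarith [ht.2])⟩
  have hr (t : ℝ) (ht : t ∈ Ioo 0 T) : (1 - u t) / (T - t) ∈ Icc a k :=
    one_sub_exp_neg_mul_div_mem_Icc hk (sub_pos.2 ht.2) (by linarith [ht.1])
  set φ : ℝ → ℝ := fun t => u t ^ γ * ((1 - u t) / (T - t)) ^ β
  have hφ_eq : EqOn (fun t => u t ^ γ * (1 - u t) ^ β) (fun t => φ t * (T - t) ^ β)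
      (Ioo 0 T) := by
    intro t ht
    have hTt : 0 < T - t := sub_pos.2 ht.2
    simp only [φ, div_rpow (sub_nonneg.2 (hu t ht).2) hTt.le, mul_assoc,
      div_mul_cancel₀ _ (rpow_pos_of_pos hTt β).ne']
  set m : ℝ := min (exp (-(k * T)) ^ γ) (1 ^ γ) * min (a ^ β) (k ^ β)
  set M : ℝ := max (exp (-(k * T)) ^ γ) (1 ^ γ) * max (a ^ β) (k ^ β)
  have hm₁ : 0 < min (exp (-(k * T)) ^ γ) (1 ^ γ) := lt_min (by positivity) (by positivity)
  have hm₂ : 0 < min (a ^ β) (k ^ β) := lt_min (by positivity) (by positivity)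
  have hφ_bounds : ∀ t ∈ Ioo 0 T, m ≤ ‖φ t‖ ∧ ‖φ t‖ ≤ M := by
    intro t ht
    have h₁ := rpow_mem_Icc_min_max (exp_pos _) (hu t ht) γ
    have h₂ := rpow_mem_Icc_min_max ha (hr t ht) β
    rw [Real.norm_of_nonneg (mul_nonneg (hm₁.le.trans h₁.1) (hm₂.le.trans h₂.1))]
    exact ⟨mul_le_mul h₁.1 h₂.1 hm₂.le (hm₁.le.trans h₁.1),
      mul_le_mul h₁.2 h₂.2 (hm₂.le.trans h₂.1) ((hm₁.le.trans h₁.1).trans h₁.2)⟩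
  rw [integrableOn_congr_fun hφ_eq measurableSet_Ioo, IntegrableOn,
    integrable_mul_iff_of_norm_bounds (by fun_prop) (mul_pos hm₁ hm₂)
      ((ae_restrict_iff' measurableSet_Ioo).2 (Filter.Eventually.of_forall hφ_bounds))]
  exact integrableOn_Ioo_sub_rpow_iff hT

theorem integrable_sphere_ambient_iff_general (n : ℕ) (hn : 3 ≤ n) (α : ℝ)
    (d : ℝ) (hd0 : 0 < d) (hd1 : d < 1) (T : ℝ) (hT : T = -Real.log d / (2 * n)) :
    IntegrableOn
      (fun t : ℝ => (d * Real.exp (2 * n * t)) ^ (α / 2) *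
        (1 - d * Real.exp (2 * n * t)) ^ (((n : ℝ) - α) / 2))
      (Set.Ioo (0 : ℝ) T) ↔ α < n + 2 := by
  have h2n : (0 : ℝ) < 2 * n := by positivity
  have hT0 : 0 < T := hT ▸ div_pos (neg_pos.2 (log_neg hd0 hd1)) h2n
  have h2nT : 2 * n * T = -log d := by rw [hT]; field_simp
  have hd (t : ℝ) : d * exp (2 * n * t) = exp (-(2 * n * (T - t))) := by
    rw [mul_sub, neg_sub, sub_eq_add_neg, exp_add, h2nT, neg_neg, exp_log hd0, mul_comm]
  simp only [hd]
  rw [integrableOn_Ioo_exp_rpow_mul_one_sub_exp_rpow_iff h2n hT0]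
  constructor <;> intro <;> linarith

/-- Spherical ambient example: for an integer `n ≥ 3`, a real `α > 0`, `0 < d < 1` and
`T = -ln d/(2n)`, the function `t ↦ (d e^{2nt})^{α/2} (1 - d e^{2nt})^{(n-α)/2}` is
integrable on `(0, T)` if and only if `α < n + 2`. -/
theorem integrable_sphere_ambient_iff (n : ℕ) (hn : 3 ≤ n) (α : ℝ) (hα : 0 < α)
    (d : ℝ) (hd0 : 0 < d) (hd1 : d < 1) (T : ℝ) (hT : T = -Real.log d / (2 * n)) :
    IntegrableOn
      (fun t : ℝ => (d * Real.exp (2 * n * t)) ^ (α / 2) *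
        (1 - d * Real.exp (2 * n * t)) ^ (((n : ℝ) - α) / 2))
      (Set.Ioo (0 : ℝ) T) ↔ α < n + 2 :=
  integrable_sphere_ambient_iff_general n hn α d hd0 hd1 T hT
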